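/- arXiv:0904.1536 — 3 statements merged into one kernel-verified Lean document; each statement's English description precedes it below -/
import Mathlib

section
/- Osgood's lemma, vanishing case: Let γ ∈ L¹_loc(ℝ₊; ℝ₊), μ : ℝ₊ → ℝ₊ a continuous nondecreasing function with μ(r) > 0 for r > 0, and α a measurable nonnegative function satisfying α(t) ≤ ∫₀ᵗ γ(τ) μ(α(τ)) dτ for all t ∈ ℝ₊. If ∫₀¹ dr/μ(r) = +∞, then α(t) = 0 for all t ∈ ℝ₊. -/
/-!
Suppose `α t > 0`. For `ε > 0` the majorant `ω s = ε + ∫₀ˢ γ μ(α)` is positive, nondecreasing,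
dominates `α`, and satisfies `ω' ≤ γ μ(ω)`; hence `∫_{ω 0}^{ω s} dr/μ(r)` grows at most like
`∫₀ˢ γ`, and so `∫_ε^{α t} dr/μ(r) ≤ ∫₀ᵗ γ` uniformly in `ε`, contradicting the divergence of
`∫₀¹ dr/μ(r)`. As `ω` is merely absolutely continuous, the comparison is proved by continuous
induction: on `[x, y]` the increment of `∫^ω dr/μ(r)` is at most
`(ω y - ω x) / μ(ω x) ≤ (μ(ω y) / μ(ω x)) ∫ₓʸ γ`, and the ratio tends to `1` as `y ↓ x`.
-/

open MeasureTheory Set Filter Topology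

theorem ContinuousOn.le_left_of_frequently_nhdsGT_le {g : ℝ → ℝ} {a b : ℝ}
    (hg : ContinuousOn g (Icc a b)) (h : ∀ x ∈ Ico a b, ∃ᶠ y in 𝓝[>] x, g y ≤ g x) :
    ∀ x ∈ Icc a b, g x ≤ g a := by
  refine IsClosed.Icc_subset_of_forall_exists_gt (s := {x | g x ≤ g a}) ?_ (le_refl (g a))
    fun x ⟨hxa, hx⟩ z hz ↦ ?_
  · rw [inter_comm]
    exact hg.preimage_isClosed_of_isClosed isClosed_Icc isClosed_Iic
  · have hIoc : Ioc x (min z b) ∈ 𝓝[>] x := Ioc_mem_nhdsGT (lt_min hz hx.2)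
    obtain ⟨y, hyx, hy⟩ := ((h x hx).and_eventually hIoc).exists
    exact ⟨y, hyx.trans hxa, hy.1, hy.2.trans (min_le_left _ _)⟩

theorem sub_le_sub_of_frequently_nhdsGT_sub_le_mul {u v : ℝ → ℝ} {a b : ℝ}
    (hu : ContinuousOn u (Icc a b)) (hv : ContinuousOn v (Icc a b))
    (h : ∀ x ∈ Ico a b, ∀ c > 1, ∃ᶠ y in 𝓝[>] x, u y - u x ≤ c * (v y - v x)) :
    ∀ x ∈ Icc a b, u x - u a ≤ v x - v a := by
  intro x hx
  have hc : ∀ c ∈ Ioi (1 : ℝ), u x - u a ≤ c * (v x - v a) := fun c hc ↦ by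
    have hg : ContinuousOn (fun y ↦ u y - c * v y) (Icc a b) := hu.sub (continuousOn_const.mul hv)
    have := hg.le_left_of_frequently_nhdsGT_le
      (fun y hy ↦ (h y hy c hc).mono fun z hz ↦ by linarith) x hx
    linarith
  have hlim : Tendsto (fun c ↦ c * (v x - v a)) (𝓝[>] 1) (𝓝 (v x - v a)) := by
    simpa using ((continuous_mul_const (v x - v a)).tendsto 1).mono_left nhdsWithin_le_nhds
  exact ge_of_tendsto hlim (eventually_nhdsWithin_of_forall hc)

theorem intervalIntegrable_inv_of_continuousOn {μ : ℝ → ℝ} (hμ_cont : ContinuousOn μ (Ioi 0))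
    (hμ_pos : ∀ r, 0 < r → 0 < μ r) {p q : ℝ} (hp : 0 < p) (hq : 0 < q) :
    IntervalIntegrable (fun r ↦ (μ r)⁻¹) volume p q :=
  ((hμ_cont.inv₀ fun r hr ↦ (hμ_pos r hr).ne').mono
    fun _ hr ↦ (lt_min hp hq).trans_le hr.1).intervalIntegrable

theorem integral_inv_le_sub_div_of_monotoneOn {μ : ℝ → ℝ} {p q : ℝ} (hpq : p ≤ q)
    (hμ_mono : MonotoneOn μ (Icc p q)) (hμp : 0 < μ p) :
    ∫ r in p..q, (μ r)⁻¹ ≤ (q - p) / μ p := by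
  have hle : ∀ r ∈ Icc p q, μ p ≤ μ r := fun r hr ↦ hμ_mono (left_mem_Icc.2 hpq) hr hr.1
  have hanti : AntitoneOn (fun r ↦ (μ r)⁻¹) (uIcc p q) := by
    rw [uIcc_of_le hpq]
    exact fun r hr s hs hrs ↦ inv_anti₀ (hμp.trans_le (hle r hr)) (hμ_mono hr hs hrs)
  calc ∫ r in p..q, (μ r)⁻¹ ≤ ∫ _ in p..q, (μ p)⁻¹ :=
        intervalIntegral.integral_mono_on hpq hanti.intervalIntegrable intervalIntegrable_const
          fun r hr ↦ inv_anti₀ hμp (hle r hr)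
    _ = (q - p) / μ p := by simp [div_eq_mul_inv]

theorem integral_inv_le_sub_of_sub_le_mul {μ ω Γ : ℝ → ℝ} {a b : ℝ} (hab : a ≤ b)
    (hμ_cont : ContinuousOn μ (Ioi 0)) (hμ_mono : MonotoneOn μ (Ioi 0))
    (hμ_pos : ∀ r, 0 < r → 0 < μ r)
    (hω_cont : ContinuousOn ω (Icc a b)) (hω_mono : MonotoneOn ω (Icc a b)) (hωa : 0 < ω a)
    (hΓ_cont : ContinuousOn Γ (Icc a b))
    (hstep : ∀ x ∈ Icc a b, ∀ y ∈ Icc a b, x ≤ y → ω y - ω x ≤ μ (ω y) * (Γ y - Γ x)) :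
    ∫ r in ω a..ω b, (μ r)⁻¹ ≤ Γ b - Γ a := by
  have hω_pos : ∀ x ∈ Icc a b, 0 < ω x := fun x hx ↦
    hωa.trans_le (hω_mono (left_mem_Icc.2 hab) hx hx.1)
  have hω_maps : MapsTo ω (Icc a b) (uIcc (ω a) (ω b)) := fun x hx ↦ by
    rw [uIcc_of_le (hω_mono (left_mem_Icc.2 hab) (right_mem_Icc.2 hab) hab)]
    exact ⟨hω_mono (left_mem_Icc.2 hab) hx hx.1, hω_mono hx (right_mem_Icc.2 hab) hx.2⟩
  have hinv_ii := @intervalIntegrable_inv_of_continuousOn μ hμ_cont hμ_pos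
  have hΦ_cont : ContinuousOn (fun s ↦ ∫ r in ω a..ω s, (μ r)⁻¹) (Icc a b) :=
    (intervalIntegral.continuousOn_primitive_interval'
      (hinv_ii hωa (hω_pos b (right_mem_Icc.2 hab))) left_mem_uIcc).comp hω_cont hω_maps
  have := sub_le_sub_of_frequently_nhdsGT_sub_le_mul hΦ_cont hΓ_cont ?_ b (right_mem_Icc.2 hab)
  · simpa using this
  intro x hx c hc
  have hxI : x ∈ Icc a b := Ico_subset_Icc_self hx
  have hμωx : 0 < μ (ω x) := hμ_pos _ (hω_pos x hxI)
  have hμω_cont : ContinuousWithinAt (fun s ↦ μ (ω s)) (Icc a b) x :=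
    hμ_cont.comp hω_cont hω_pos x hxI
  have hlt : ∀ᶠ y in 𝓝[>] x, μ (ω y) < c * μ (ω x) :=
    (hμω_cont.mono_of_mem_nhdsWithin (Icc_mem_nhdsGT_of_mem hx)).eventually_lt_const
      (lt_mul_of_one_lt_left hμωx hc)
  refine (hlt.and (Ioc_mem_nhdsGT hx.2)).frequently.mono fun y ⟨hy, hxy, hyb⟩ ↦ ?_
  have hyI : y ∈ Icc a b := ⟨hx.1.trans hxy.le, hyb⟩
  have hωxy : ω x ≤ ω y := hω_mono hxI hyI hxy.le
  have hΓ : 0 ≤ Γ y - Γ x := (mul_nonneg_iff_of_pos_left (hμ_pos _ (hω_pos y hyI))).1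
    ((sub_nonneg.2 hωxy).trans (hstep x hxI y hyI hxy.le))
  calc (∫ r in ω a..ω y, (μ r)⁻¹) - ∫ r in ω a..ω x, (μ r)⁻¹ = ∫ r in ω x..ω y, (μ r)⁻¹ :=
        intervalIntegral.integral_interval_sub_left (hinv_ii hωa (hω_pos y hyI))
          (hinv_ii hωa (hω_pos x hxI))
    _ ≤ (ω y - ω x) / μ (ω x) := integral_inv_le_sub_div_of_monotoneOn hωxy
        (hμ_mono.mono fun r hr ↦ (hω_pos x hxI).trans_le hr.1) hμωx
    _ ≤ μ (ω y) * (Γ y - Γ x) / μ (ω x) := by gcongr; exact hstep x hxI y hyI hxy.le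
    _ ≤ c * μ (ω x) * (Γ y - Γ x) / μ (ω x) := by gcongr
    _ = c * (Γ y - Γ x) := by field_simp

theorem integrableOn_Ioc_zero_of_intervalIntegral_le {g : ℝ → ℝ} {b C : ℝ}
    (hg_nonneg : ∀ x ∈ Ioc 0 b, 0 ≤ g x)
    (hg_int : ∀ ε ∈ Ioo 0 b, IntervalIntegrable g volume ε b)
    (hg_le : ∀ ε ∈ Ioo 0 b, ∫ x in ε..b, g x ≤ C) :
    IntegrableOn g (Ioc 0 b) := by
  rcases le_or_gt b 0 with hb | hb
  · simp [Ioc_eq_empty hb.not_gt]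
  set ε : ℕ → ℝ := fun n ↦ b / (n + 2)
  have hε : ∀ n, ε n ∈ Ioo 0 b := fun n ↦
    ⟨by positivity, div_lt_self hb (by linarith [n.cast_nonneg (α := ℝ)])⟩
  have hε_lim : Tendsto ε atTop (𝓝 0) :=
    tendsto_const_nhds.div_atTop (tendsto_natCast_atTop_atTop.atTop_add tendsto_const_nhds)
  refine integrableOn_Ioc_of_intervalIntegral_norm_bounded_left (I := C)
    (fun n ↦ (intervalIntegrable_iff_integrableOn_Ioc_of_le (hε n).2.le).1 (hg_int _ (hε n)))
    hε_lim (Eventually.of_forall fun n ↦ ?_)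
  rw [setIntegral_congr_fun measurableSet_Ioc fun x hx ↦
      Real.norm_of_nonneg (hg_nonneg x ⟨(hε n).1.trans hx.1, hx.2⟩),
    ← intervalIntegral.integral_of_le (hε n).2.le]
  exact hg_le _ (hε n)

theorem nonneg_of_continuous_of_forall_pos {μ : ℝ → ℝ} (hμ_cont : Continuous μ)
    (hμ_pos : ∀ r, 0 < r → 0 < μ r) {r : ℝ} (hr : 0 ≤ r) : 0 ≤ μ r :=
  closure_minimal (s := Ioi 0) (fun r hr ↦ (hμ_pos r hr).le)
    (isClosed_le continuous_const hμ_cont) (closure_Ioi (0:ℝ) ▸ hr)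

theorem integral_inv_mono_right {μ : ℝ → ℝ} {ε a b : ℝ} (hμ_cont : ContinuousOn μ (Ioi 0))
    (hμ_pos : ∀ r, 0 < r → 0 < μ r) (hε : 0 < ε) (hεa : ε ≤ a) (hab : a ≤ b) :
    ∫ r in ε..a, (μ r)⁻¹ ≤ ∫ r in ε..b, (μ r)⁻¹ := by
  refine intervalIntegral.integral_mono_interval le_rfl hεa hab
    (ae_restrict_of_forall_mem measurableSet_Ioc fun r hr ↦
      (inv_pos.2 (hμ_pos r (hε.trans hr.1))).le) ?_
  exact intervalIntegrable_inv_of_continuousOn hμ_cont hμ_pos hε (hε.trans_le (hεa.trans hab))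

theorem integral_inv_le_integral_of_le_integral_mul_comp {γ μ α : ℝ → ℝ} {t ε : ℝ}
    (ht : 0 ≤ t) (hγ_nonneg : ∀ s ∈ Icc 0 t, 0 ≤ γ s) (hγ_int : IntegrableOn γ (Icc 0 t))
    (hμ_cont : Continuous μ) (hμ_mono : MonotoneOn μ (Ici 0)) (hμ_pos : ∀ r, 0 < r → 0 < μ r)
    (hα_nonneg : ∀ s ∈ Icc 0 t, 0 ≤ α s)
    (hα : ∀ s ∈ Icc 0 t, α s ≤ ∫ τ in (0:ℝ)..s, γ τ * μ (α τ))
    (hf : IntervalIntegrable (fun τ ↦ γ τ * μ (α τ)) volume 0 t) (hε : 0 < ε) (hεα : ε ≤ α t) :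
    ∫ r in ε..α t, (μ r)⁻¹ ≤ ∫ τ in (0:ℝ)..t, γ τ := by
  set f : ℝ → ℝ := fun τ ↦ γ τ * μ (α τ)
  set ω : ℝ → ℝ := fun s ↦ ε + ∫ τ in (0:ℝ)..s, f τ
  set Γ : ℝ → ℝ := fun s ↦ ∫ τ in (0:ℝ)..s, γ τ
  have hicc : uIcc 0 t = Icc 0 t := uIcc_of_le ht
  have h0 : (0:ℝ) ∈ Icc 0 t := left_mem_Icc.2 ht
  have hγ_ii : IntervalIntegrable γ volume 0 t := (hicc ▸ hγ_int).intervalIntegrable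
  have hii : ∀ {g : ℝ → ℝ}, IntervalIntegrable g volume 0 t →
      ∀ x ∈ Icc 0 t, ∀ y ∈ Icc 0 t, IntervalIntegrable g volume x y := fun hg x hx y hy ↦
    hg.mono_set (hicc ▸ uIcc_subset_Icc hx hy)
  have hω_sub : ∀ x ∈ Icc 0 t, ∀ y ∈ Icc 0 t, ω y - ω x = ∫ τ in x..y, f τ := fun x hx y hy ↦ by
    rw [← intervalIntegral.integral_interval_sub_left (hii hf 0 h0 y hy) (hii hf 0 h0 x hx)]
    ring
  have hf_nonneg : ∀ τ ∈ Icc 0 t, 0 ≤ f τ := fun τ hτ ↦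
    mul_nonneg (hγ_nonneg τ hτ)
      (nonneg_of_continuous_of_forall_pos hμ_cont hμ_pos (hα_nonneg τ hτ))
  have hω_mono : MonotoneOn ω (Icc 0 t) := fun x hx y hy hxy ↦ by
    have : 0 ≤ ∫ τ in x..y, f τ := intervalIntegral.integral_nonneg hxy fun τ hτ ↦
      hf_nonneg τ ⟨hx.1.trans hτ.1, hτ.2.trans hy.2⟩
    linarith [hω_sub x hx y hy]
  have hαω : ∀ s ∈ Icc 0 t, α s ≤ ω s := fun s hs ↦ by
    linarith [hα s hs]
  have hω_cont : ContinuousOn ω (Icc 0 t) :=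
    continuousOn_const.add
      (hicc ▸ intervalIntegral.continuousOn_primitive_interval' hf left_mem_uIcc)
  have hΓ_cont : ContinuousOn Γ (Icc 0 t) :=
    hicc ▸ intervalIntegral.continuousOn_primitive_interval' hγ_ii left_mem_uIcc
  have hstep : ∀ x ∈ Icc 0 t, ∀ y ∈ Icc 0 t, x ≤ y → ω y - ω x ≤ μ (ω y) * (Γ y - Γ x) := by
    intro x hx y hy hxy
    rw [hω_sub x hx y hy, intervalIntegral.integral_interval_sub_left (hii hγ_ii 0 h0 y hy)
      (hii hγ_ii 0 h0 x hx), ← intervalIntegral.integral_const_mul]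
    refine intervalIntegral.integral_mono_on hxy (hii hf x hx y hy)
      ((hii hγ_ii x hx y hy).const_mul _) fun τ hτ ↦ ?_
    have hτI : τ ∈ Icc 0 t := ⟨hx.1.trans hτ.1, hτ.2.trans hy.2⟩
    have hατ : α τ ≤ ω y := (hαω τ hτI).trans (hω_mono hτI hy hτ.2)
    rw [mul_comm (μ (ω y))]
    exact mul_le_mul_of_nonneg_left
      (hμ_mono (hα_nonneg τ hτI) ((hα_nonneg τ hτI).trans hατ) hατ) (hγ_nonneg τ hτI)
  have hω0 : ω 0 = ε := by simp [ω]
  have hαωt : α t ≤ ω t := hαω t (right_mem_Icc.2 ht)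
  calc ∫ r in ε..α t, (μ r)⁻¹ ≤ ∫ r in ω 0..ω t, (μ r)⁻¹ := by
        rw [hω0]; exact integral_inv_mono_right hμ_cont.continuousOn hμ_pos hε hεα hαωt
    _ ≤ Γ t - Γ 0 := integral_inv_le_sub_of_sub_le_mul ht hμ_cont.continuousOn
        (hμ_mono.mono Ioi_subset_Ici_self) hμ_pos hω_cont hω_mono (hω0 ▸ hε) hΓ_cont hstep
    _ = ∫ τ in (0:ℝ)..t, γ τ := by simp [Γ]

theorem osgood_lemma_vanishing_general (γ μ α : ℝ → ℝ)
    (hγ_nonneg : ∀ t, 0 ≤ t → 0 ≤ γ t)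
    (hγ_loc : ∀ t, 0 ≤ t → IntegrableOn γ (Icc 0 t))
    (hμ_cont : Continuous μ) (hμ_mono : MonotoneOn μ (Ici 0))
    (hμ_pos : ∀ r, 0 < r → 0 < μ r)
    (hμ_div : ¬ IntegrableOn (fun r => (μ r)⁻¹) (Ioc (0:ℝ) 1))
    (hα_nonneg : ∀ t, 0 ≤ t → 0 ≤ α t)
    (hα : ∀ t, 0 ≤ t → α t ≤ ∫ τ in (0:ℝ)..t, γ τ * μ (α τ)) :
    ∀ t, 0 ≤ t → α t = 0 := by
  intro t ht
  refine le_antisymm (not_lt.1 fun hαt ↦ hμ_div ?_) (hα_nonneg t ht)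
  have hf : IntervalIntegrable (fun τ ↦ γ τ * μ (α τ)) volume 0 t := by
    by_contra hf
    -- the integral of a non-integrable function is `0`, which would force `α t ≤ 0`
    linarith [intervalIntegral.integral_undef hf ▸ hα t ht]
  have hinv_cont : ContinuousOn (fun r ↦ (μ r)⁻¹) (Ioi 0) :=
    hμ_cont.continuousOn.inv₀ fun r hr ↦ (hμ_pos r hr).ne'
  have h_near : IntegrableOn (fun r ↦ (μ r)⁻¹) (Ioc 0 (α t)) :=
    integrableOn_Ioc_zero_of_intervalIntegral_le (fun r hr ↦ (inv_pos.2 (hμ_pos r hr.1)).le)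
      (fun ε hε ↦ intervalIntegrable_inv_of_continuousOn hμ_cont.continuousOn hμ_pos hε.1 hαt)
      fun ε hε ↦ integral_inv_le_integral_of_le_integral_mul_comp ht
        (fun s hs ↦ hγ_nonneg s hs.1) (hγ_loc t ht) hμ_cont hμ_mono hμ_pos
        (fun s hs ↦ hα_nonneg s hs.1) (fun s hs ↦ hα s hs.1) hf hε.1 hε.2.le
  have h_far : IntegrableOn (fun r ↦ (μ r)⁻¹) (Ioc (α t) 1) :=
    ((hinv_cont.mono fun r hr ↦ hαt.trans_le hr.1).integrableOn_Icc).mono_set Ioc_subset_Icc_self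
  exact (h_near.union h_far).mono_set fun r hr ↦ (le_or_gt r (α t)).imp
    (fun h ↦ ⟨hr.1, h⟩) fun h ↦ ⟨h, hr.2⟩

/-- **Osgood's lemma, vanishing case.** If `0 ≤ α t ≤ ∫₀ᵗ γ μ(α)` with `γ ≥ 0` locally
integrable, `μ` continuous nondecreasing and positive on `(0,∞)`, and
`∫₀¹ dr/μ(r) = +∞` (i.e. `1/μ` is not integrable on `(0,1]`), then `α ≡ 0` on `ℝ₊`. -/
theorem osgood_lemma_vanishing (γ μ α : ℝ → ℝ)
    (hγ_nonneg : ∀ t, 0 ≤ t → 0 ≤ γ t)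
    (hγ_loc : ∀ t, 0 ≤ t → IntegrableOn γ (Icc 0 t))
    (hμ_cont : Continuous μ) (hμ_mono : MonotoneOn μ (Ici 0))
    (hμ_pos : ∀ r, 0 < r → 0 < μ r)
    (hμ_div : ¬ IntegrableOn (fun r => (μ r)⁻¹) (Ioc (0:ℝ) 1))
    (hα_meas : Measurable α)
    (hα_nonneg : ∀ t, 0 ≤ t → 0 ≤ α t)
    (hα : ∀ t, 0 ≤ t → α t ≤ ∫ τ in (0:ℝ)..t, γ τ * μ (α τ)) :
    ∀ t, 0 ≤ t → α t = 0 :=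
  osgood_lemma_vanishing_general γ μ α hγ_nonneg hγ_loc hμ_cont hμ_mono hμ_pos hμ_div hα_nonneg hα
end

section
/- Let μ(r) = r(1 − log r) for 0 < r ≤ 1, let γ ∈ L¹_loc(ℝ₊;ℝ₊), a > 0, and let α be a measurable function with 0 ≤ α(t) ≤ a + ∫₀ᵗ γ(τ) μ(α(τ)) dτ. Set G(t) = ∫₀ᵗ γ(τ) dτ. If a ≤ exp(1 − exp(G(t))), then α(t) ≤ a^{exp(−G(t))} · exp(1 − exp(−G(t))). -/
/-!
For `μ r = r (1 - log r)` the Osgood function `Ψ r = -log (1 - log r)` satisfies `Ψ' = 1 / μ`,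
and `Ψ b ≤ Ψ a + G` unwinds to `b ≤ a ^ exp (-G) * exp (1 - exp (-G))`. Since `μ` is monotone only
on `[0, 1]`, freeze it outside `[0, 1]`; the truncation `μ̂` is monotone and dominates `μ` on
`[0, ∞)`. Then `β = a + ∫₀ˢ γ μ̂(α)` is absolutely continuous with `α ≤ β`, and along it the
antiderivative `Ψ̂` of `1 / μ̂` grows at rate `γ μ̂(α) / μ̂(β) ≤ γ`, so `Ψ̂ (β t) ≤ Ψ a + G t`.
The smallness assumption on `a` says exactly `Ψ a + G t ≤ 0`, which forces `β t ≤ 1`, where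
`Ψ̂ = Ψ`.
-/

open MeasureTheory Set Filter Topology

theorem LipschitzOnWith.comp_absolutelyContinuousOnInterval {X Y : Type*} [PseudoMetricSpace X]
    [PseudoMetricSpace Y] {g : X → Y} {f : ℝ → X} {s : Set X} {K : NNReal} {a b : ℝ}
    (hg : LipschitzOnWith K g s) (hf : AbsolutelyContinuousOnInterval f a b)
    (hfs : MapsTo f (uIcc a b) s) : AbsolutelyContinuousOnInterval (g ∘ f) a b := by
  have hK := Tendsto.const_mul (K : ℝ) hf
  rw [mul_zero] at hK
  refine squeeze_zero' (Eventually.of_forall fun _ ↦ Finset.sum_nonneg fun _ _ ↦ dist_nonneg)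
    ?_ hK
  filter_upwards [mem_inf_of_right (mem_principal_self _)] with E hE
  rw [Finset.mul_sum]
  exact Finset.sum_le_sum fun i hi ↦
    hg.dist_le_mul _ (hfs (hE.1 i hi).1) _ (hfs (hE.1 i hi).2)

theorem AbsolutelyContinuousOnInterval.sub_le_integral_of_ae_deriv_le {f g : ℝ → ℝ} {a b : ℝ}
    (hab : a ≤ b) (hf : AbsolutelyContinuousOnInterval f a b)
    (hg : IntervalIntegrable g volume a b) (hfg : ∀ᵐ x, x ∈ Icc a b → deriv f x ≤ g x) :
    f b - f a ≤ ∫ x in a..b, g x := by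
  rw [← hf.integral_deriv_eq_sub]
  exact intervalIntegral.integral_mono_ae_restrict hab hf.intervalIntegrable_deriv hg
    ((ae_restrict_iff' measurableSet_Icc).2 hfg)

/-- Unlike `intervalIntegral.integral_mono_on`, `f` need not be integrable: its junk integral `0`
is still below `∫ g`. -/
theorem intervalIntegral.integral_mono_on_of_nonneg {f g : ℝ → ℝ} {a b : ℝ} (hab : a ≤ b)
    (hg : IntervalIntegrable g volume a b) (hg0 : ∀ x ∈ Icc a b, 0 ≤ g x)
    (hfg : ∀ x ∈ Icc a b, f x ≤ g x) : ∫ x in a..b, f x ≤ ∫ x in a..b, g x := by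
  by_cases hf : IntervalIntegrable f volume a b
  · exact integral_mono_on hab hf hg hfg
  · rw [integral_undef hf]
    exact integral_nonneg hab hg0

namespace LogLip

noncomputable def modulus (r : ℝ) : ℝ := r * (1 - Real.log r)

noncomputable def truncModulus : ℝ → ℝ := IccExtend (zero_le_one' ℝ) (modulus ∘ Subtype.val)

/-- An antiderivative of `1 / truncModulus` on `(0, ∞)`, vanishing at `1`. -/
noncomputable def potential (r : ℝ) : ℝ := if r ≤ 1 then -Real.log (1 - Real.log r) else r - 1

lemma continuous_modulus : Continuous modulus := by
  have : modulus = fun r ↦ r - r * Real.log r := by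
    ext r; simp only [modulus]; ring
  rw [this]
  exact continuous_id.sub Real.continuous_mul_log

lemma modulus_one : modulus 1 = 1 := by simp [modulus]

lemma modulus_le_one {r : ℝ} (hr : 0 ≤ r) : modulus r ≤ 1 := by
  rcases hr.eq_or_lt with rfl | hr
  · simp [modulus]
  · have := Real.log_le_sub_one_of_pos (inv_pos.2 hr)
    rw [Real.log_inv] at this
    calc modulus r ≤ r * r⁻¹ := by unfold modulus; gcongr; linarith
      _ = 1 := mul_inv_cancel₀ hr.ne'

lemma modulus_pos {r : ℝ} (h0 : 0 < r) (h1 : r ≤ 1) : 0 < modulus r :=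
  mul_pos h0 (by linarith [Real.log_nonpos h0.le h1])

lemma hasDerivAt_modulus {r : ℝ} (hr : 0 < r) : HasDerivAt modulus (-Real.log r) r := by
  have : HasDerivAt (fun x ↦ x * (1 - Real.log x)) (1 * (1 - Real.log r) + r * (0 - r⁻¹)) r :=
    (hasDerivAt_id r).mul ((hasDerivAt_const r 1).sub (Real.hasDerivAt_log hr.ne'))
  exact this.congr_deriv (by field_simp; ring)

lemma monotoneOn_modulus : MonotoneOn modulus (Icc 0 1) := by
  refine monotoneOn_of_deriv_nonneg (convex_Icc 0 1) continuous_modulus.continuousOn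
    (fun x hx ↦ ?_) (fun x hx ↦ ?_) <;> rw [interior_Icc] at hx
  · exact (hasDerivAt_modulus hx.1).differentiableAt.differentiableWithinAt
  · rw [(hasDerivAt_modulus hx.1).deriv, neg_nonneg]
    exact Real.log_nonpos hx.1.le hx.2.le

lemma truncModulus_of_le_one {r : ℝ} (h0 : 0 ≤ r) (h1 : r ≤ 1) : truncModulus r = modulus r :=
  IccExtend_of_mem _ _ ⟨h0, h1⟩

lemma truncModulus_of_one_le {r : ℝ} (h : 1 ≤ r) : truncModulus r = 1 := by
  rw [truncModulus, IccExtend_of_right_le _ _ h]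
  exact modulus_one

lemma monotone_truncModulus : Monotone truncModulus :=
  Monotone.IccExtend _ fun x y hxy ↦ monotoneOn_modulus x.2 y.2 hxy

lemma continuous_truncModulus : Continuous truncModulus :=
  continuous_IccExtend_iff.2 (continuous_modulus.comp continuous_subtype_val)

lemma truncModulus_pos {r : ℝ} (hr : 0 < r) : 0 < truncModulus r := by
  rcases le_total r 1 with h | h
  · rw [truncModulus_of_le_one hr.le h]
    exact modulus_pos hr h
  · rw [truncModulus_of_one_le h]
    exact one_pos

lemma truncModulus_nonneg (r : ℝ) : 0 ≤ truncModulus r := by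
  have hr := (projIcc (0 : ℝ) 1 (zero_le_one' ℝ) r).2
  calc 0 = modulus 0 := by simp [modulus]
    _ ≤ modulus (projIcc (0 : ℝ) 1 (zero_le_one' ℝ) r) :=
      monotoneOn_modulus (left_mem_Icc.2 zero_le_one) hr hr.1

lemma truncModulus_le_one (r : ℝ) : truncModulus r ≤ 1 :=
  (monotone_truncModulus (le_max_left r 1)).trans_eq (truncModulus_of_one_le (le_max_right r 1))

lemma modulus_le_truncModulus {r : ℝ} (hr : 0 ≤ r) : modulus r ≤ truncModulus r := by
  rcases le_total r 1 with h | h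
  · rw [truncModulus_of_le_one hr h]
  · rw [truncModulus_of_one_le h]
    exact modulus_le_one hr

lemma potential_of_le_one {r : ℝ} (hr : r ≤ 1) : potential r = -Real.log (1 - Real.log r) :=
  if_pos hr

lemma hasDerivAt_neg_log_one_sub_log {x : ℝ} (hx : 0 < x) (hxe : x < Real.exp 1) :
    HasDerivAt (fun x ↦ -Real.log (1 - Real.log x)) (modulus x)⁻¹ x := by
  have hne : 1 - Real.log x ≠ 0 := by
    have := (Real.log_lt_iff_lt_exp hx).2 hxe
    linarith
  have : HasDerivAt (fun x ↦ -Real.log (1 - Real.log x)) (-((0 - x⁻¹) / (1 - Real.log x))) x :=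
    (((hasDerivAt_const x 1).sub (Real.hasDerivAt_log hx.ne')).log hne).neg
  exact this.congr_deriv (by simp only [modulus, mul_inv]; field_simp; ring)

lemma hasDerivAt_potential {r : ℝ} (hr : 0 < r) :
    HasDerivAt potential (truncModulus r)⁻¹ r := by
  have hlin : HasDerivAt (fun x : ℝ ↦ x - 1) 1 r := (hasDerivAt_id r).sub_const 1
  rcases lt_trichotomy r 1 with h | rfl | h
  · rw [truncModulus_of_le_one hr.le h.le]
    refine (hasDerivAt_neg_log_one_sub_log hr (h.trans (by simp))).congr_of_eventuallyEq ?_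
    filter_upwards [Iio_mem_nhds h] with x hx
    exact if_pos (le_of_lt hx)
  · rw [truncModulus_of_one_le le_rfl, inv_one]
    have hleft : HasDerivWithinAt potential 1 (Iic 1) 1 := by
      have := (hasDerivAt_neg_log_one_sub_log one_pos (by simp)).hasDerivWithinAt (s := Iic 1)
      rw [modulus_one, inv_one] at this
      exact this.congr (fun x hx ↦ if_pos hx) (if_pos le_rfl)
    have hright : HasDerivWithinAt potential 1 (Ici 1) 1 :=
      hlin.hasDerivWithinAt.congr (fun x hx ↦ ?_) (by simp [potential])
    · simpa [Iic_union_Ici] using hleft.union hright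
    · rcases (mem_Ici.1 hx).eq_or_lt with rfl | hx
      · simp [potential]
      · exact if_neg (not_le.2 hx)
  · rw [truncModulus_of_one_le h.le, inv_one]
    refine hlin.congr_of_eventuallyEq ?_
    filter_upwards [Ioi_mem_nhds h] with x hx
    exact if_neg (not_le.2 hx)

lemma lipschitzOnWith_potential {a : ℝ} (ha : 0 < a) :
    LipschitzOnWith (Real.toNNReal (truncModulus a)⁻¹) potential (Ici a) := by
  refine (convex_Ici a).lipschitzOnWith_of_nnnorm_hasDerivWithin_le
    (fun x hx ↦ (hasDerivAt_potential (ha.trans_le hx)).hasDerivWithinAt) fun x hx ↦ ?_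
  have hx0 := truncModulus_pos (ha.trans_le hx)
  rw [← NNReal.coe_le_coe, coe_nnnorm, Real.norm_of_nonneg (inv_nonneg.2 hx0.le),
    Real.coe_toNNReal _ (inv_nonneg.2 (truncModulus_pos ha).le)]
  exact inv_anti₀ (truncModulus_pos ha) (monotone_truncModulus hx)

lemma potential_le_of_le_integral {γ α : ℝ → ℝ} {a t : ℝ} (ha : 0 < a) (ht : 0 ≤ t)
    (hγ0 : ∀ s ∈ Icc 0 t, 0 ≤ γ s) (hγ : IntervalIntegrable γ volume 0 t)
    (hf : IntervalIntegrable (fun τ ↦ γ τ * truncModulus (α τ)) volume 0 t)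
    (hαβ : ∀ s ∈ Icc 0 t, α s ≤ a + ∫ τ in (0:ℝ)..s, γ τ * truncModulus (α τ)) :
    potential (a + ∫ τ in (0:ℝ)..t, γ τ * truncModulus (α τ)) ≤
      potential a + ∫ τ in (0:ℝ)..t, γ τ := by
  set β : ℝ → ℝ := fun s ↦ a + ∫ τ in (0:ℝ)..s, γ τ * truncModulus (α τ)
  have hβa : ∀ s ∈ Icc 0 t, a ≤ β s := fun s hs ↦
    le_add_of_nonneg_right (intervalIntegral.integral_nonneg hs.1 fun τ hτ ↦
      mul_nonneg (hγ0 τ ⟨hτ.1, hτ.2.trans hs.2⟩) (truncModulus_nonneg _))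
  have hβac : AbsolutelyContinuousOnInterval β 0 t :=
    (LipschitzWith.const a).lipschitzOnWith.absolutelyContinuousOnInterval.fun_add
      (hf.absolutelyContinuousOnInterval_intervalIntegral left_mem_uIcc)
  have hac : AbsolutelyContinuousOnInterval (potential ∘ β) 0 t :=
    (lipschitzOnWith_potential ha).comp_absolutelyContinuousOnInterval hβac
      fun s hs ↦ hβa s (uIcc_of_le ht ▸ hs)
  have hderiv : ∀ᵐ s, s ∈ Icc 0 t → deriv (potential ∘ β) s ≤ γ s := by
    filter_upwards [hf.ae_hasDerivAt_integral] with s hs hst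
    have hst' : s ∈ uIcc 0 t := uIcc_of_le ht ▸ hst
    have hβs : HasDerivAt β (γ s * truncModulus (α s)) s :=
      (hs hst' 0 left_mem_uIcc).const_add a
    have hpos := truncModulus_pos (ha.trans_le (hβa s hst))
    rw [((hasDerivAt_potential (ha.trans_le (hβa s hst))).comp s hβs).deriv,
      inv_mul_le_iff₀ hpos]
    exact (mul_le_mul_of_nonneg_left (monotone_truncModulus (hαβ s hst)) (hγ0 s hst)).trans_eq
      (mul_comm _ _)
  have := hac.sub_le_integral_of_ae_deriv_le ht hγ hderiv
  simp only [Function.comp_apply, β, intervalIntegral.integral_same, add_zero] at this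
  linarith

lemma le_of_potential_le {a b G : ℝ} (ha : 0 < a) (hG : 0 ≤ G)
    (haG : a ≤ Real.exp (1 - Real.exp G)) (h : potential b ≤ potential a + G) :
    b ≤ a ^ Real.exp (-G) * Real.exp (1 - Real.exp (-G)) := by
  rcases le_or_gt b 0 with hb | hb
  · exact hb.trans (by positivity)
  have hloga : Real.log a ≤ 1 - Real.exp G := by
    simpa using Real.log_le_log ha haG
  have hexpG : 1 ≤ Real.exp G := Real.one_le_exp hG
  have hla : 0 < 1 - Real.log a := by linarith
  rw [potential_of_le_one ((Real.log_nonpos_iff ha.le).1 (by linarith))] at h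
  have hGa : G ≤ Real.log (1 - Real.log a) := (Real.le_log_iff_exp_le hla).2 (by linarith)
  have hb1 : b ≤ 1 := by
    by_contra! hb1
    rw [potential, if_neg hb1.not_ge] at h
    linarith
  rw [potential_of_le_one hb1] at h
  have hlb : 0 < 1 - Real.log b := by linarith [Real.log_nonpos hb.le hb1]
  have key : (1 - Real.log a) * Real.exp (-G) ≤ 1 - Real.log b := by
    calc (1 - Real.log a) * Real.exp (-G) = Real.exp (Real.log (1 - Real.log a) - G) := by
          rw [Real.exp_sub, Real.exp_log hla, Real.exp_neg, div_eq_mul_inv]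
      _ ≤ Real.exp (Real.log (1 - Real.log b)) := Real.exp_le_exp.2 (by linarith)
      _ = 1 - Real.log b := Real.exp_log hlb
  rw [Real.rpow_def_of_pos ha, ← Real.exp_add, ← Real.log_le_iff_le_exp hb]
  linarith

end LogLip

/-- Quantitative Osgood lemma in the log-Lipschitz case `μ(r) = r(1 - log r)`:
if `0 ≤ α t ≤ a + ∫₀ᵗ γ(τ) μ(α τ) dτ` and `a ≤ exp(1 - exp G(t))` with
`G t = ∫₀ᵗ γ`, then `α t ≤ a ^ (exp (-G t)) * exp (1 - exp (-G t))`. -/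
theorem osgood_log_lipschitz (γ α : ℝ → ℝ) (a : ℝ) (ha : 0 < a)
    (hγ_nonneg : ∀ t, 0 ≤ t → 0 ≤ γ t)
    (hγ_loc : ∀ t, 0 ≤ t → IntegrableOn γ (Icc 0 t))
    (hα_meas : Measurable α)
    (hα : ∀ t, 0 ≤ t →
      0 ≤ α t ∧ α t ≤ a + ∫ τ in (0:ℝ)..t, γ τ * (α τ * (1 - Real.log (α τ)))) :
    ∀ t, 0 ≤ t →
      a ≤ Real.exp (1 - Real.exp (∫ τ in (0:ℝ)..t, γ τ)) →
      α t ≤ a ^ (Real.exp (-(∫ τ in (0:ℝ)..t, γ τ))) *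
        Real.exp (1 - Real.exp (-(∫ τ in (0:ℝ)..t, γ τ))) := by
  intro t ht haG
  have hγ0 : ∀ s ∈ Icc 0 t, 0 ≤ γ s := fun s hs ↦ hγ_nonneg s hs.1
  have hγ : IntervalIntegrable γ volume 0 t :=
    (intervalIntegrable_iff_integrableOn_Icc_of_le ht).2 (hγ_loc t ht)
  have hf : IntervalIntegrable (fun τ ↦ γ τ * LogLip.truncModulus (α τ)) volume 0 t := by
    refine (intervalIntegrable_iff_integrableOn_Icc_of_le ht).2 ((hγ_loc t ht).mul_bdd (c := 1)
      (LogLip.continuous_truncModulus.measurable.comp hα_meas).aestronglyMeasurable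
      (Eventually.of_forall fun τ ↦ ?_))
    rw [Real.norm_of_nonneg (LogLip.truncModulus_nonneg _)]
    exact LogLip.truncModulus_le_one _
  have hαβ : ∀ s ∈ Icc 0 t, α s ≤ a + ∫ τ in (0:ℝ)..s, γ τ * LogLip.truncModulus (α τ) :=
    fun s hs ↦ (hα s hs.1).2.trans <| add_le_add_right
      (intervalIntegral.integral_mono_on_of_nonneg hs.1
        (hf.mono_set (uIcc_subset_uIcc left_mem_uIcc (uIcc_of_le ht ▸ hs)))
        (fun τ hτ ↦ mul_nonneg (hγ_nonneg τ hτ.1) (LogLip.truncModulus_nonneg _))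
        fun τ hτ ↦ mul_le_mul_of_nonneg_left
          (LogLip.modulus_le_truncModulus (hα τ hτ.1).1) (hγ_nonneg τ hτ.1)) a
  exact (hαβ t ⟨ht, le_rfl⟩).trans <| LogLip.le_of_potential_le ha
    (intervalIntegral.integral_nonneg ht hγ0) haG
    (LogLip.potential_le_of_le_integral ha ht hγ0 hγ hf hαβ)
end

section
/- Let β ∈ [2, ∞) and s ∈ (0,1). For every smooth u on ℝ², ‖ |u|^{β−2} u ‖_{Ḣ^s(ℝ²)} ≤ C ‖u‖_{L^{2β}}^{β−2} ‖u‖_{Ḃ^s_{β,2}}, where Ḃ^s_{β,2} is the homogeneous Besov space. -/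
open MeasureTheory
open scoped ENNReal NNReal

noncomputable section

lemma rpow_key {γ x y : ℝ} (hγ : 0 ≤ γ) (hy : 0 ≤ y) (hxy : y ≤ x) :
    (x ^ γ - y ^ γ) * y ≤ γ * (x ^ γ * (x - y)) := by
  rcases eq_or_lt_of_le (hy.trans hxy) with hx | hx
  · have hx0 : x = 0 := hx.symm
    have hy0 : y = 0 := le_antisymm (hxy.trans_eq hx0) hy
    simp [hx0, hy0]
  · have hb : 1 + (γ + 1) * (y / x - 1) ≤ (1 + (y / x - 1)) ^ (γ + 1) :=
      one_add_mul_self_le_rpow_one_add (by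
        have h0 : (0:ℝ) ≤ y / x := by positivity
        linarith) (by linarith)
    rw [add_sub_cancel] at hb
    have hdiv : (y / x) ^ (γ + 1) = y ^ (γ + 1) / x ^ (γ + 1) := Real.div_rpow hy hx.le _
    have hx1 : x ^ (γ + 1) = x ^ γ * x := Real.rpow_add_one hx.ne' γ
    have hy1 : y ^ (γ + 1) = y ^ γ * y := by
      rcases eq_or_lt_of_le hy with hy0 | hy0
      · simp [← hy0, Real.zero_rpow (by positivity : γ + 1 ≠ 0)]
      · exact Real.rpow_add_one hy0.ne' γ
    have hxpos : (0:ℝ) < x ^ (γ + 1) := Real.rpow_pos_of_pos hx _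
    rw [hdiv] at hb
    have hb2 : (1 + (γ + 1) * (y / x - 1)) * x ^ (γ + 1) ≤ y ^ (γ + 1) := by
      calc (1 + (γ + 1) * (y / x - 1)) * x ^ (γ + 1)
          ≤ (y ^ (γ + 1) / x ^ (γ + 1)) * x ^ (γ + 1) :=
            mul_le_mul_of_nonneg_right hb hxpos.le
        _ = y ^ (γ + 1) := div_mul_cancel₀ _ hxpos.ne'
    have hexp : (1 + (γ + 1) * (y / x - 1)) * x ^ (γ + 1)
        = x ^ (γ + 1) + (γ + 1) * (y * x ^ γ - x ^ (γ + 1)) := by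
      have : y / x * x = y := div_mul_cancel₀ _ hx.ne'
      rw [hx1]; field_simp
    rw [hexp, hx1, hy1] at hb2
    nlinarith [Real.rpow_nonneg (hy.trans hxy) γ]

lemma pow_diff_bound_aux {γ : ℝ} (hγ : 0 ≤ γ) {a b : ℝ} (h : |b| ≤ |a|) :
    |(|a| ^ γ * a) - (|b| ^ γ * b)| ≤ (γ + 1) * ((|a| ^ γ + |b| ^ γ) * |a - b|) := by
  have h1 : |a| ^ γ * a - |b| ^ γ * b = |a| ^ γ * (a - b) + (|a| ^ γ - |b| ^ γ) * b := by ring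
  have hmono : |b| ^ γ ≤ |a| ^ γ := Real.rpow_le_rpow (abs_nonneg b) h hγ
  have h2 : |(|a| ^ γ * a) - (|b| ^ γ * b)| ≤ |a| ^ γ * |a - b| + (|a| ^ γ - |b| ^ γ) * |b| := by
    rw [h1]
    refine (abs_add_le _ _).trans ?_
    rw [abs_mul, abs_mul, abs_of_nonneg (Real.rpow_nonneg (abs_nonneg a) γ),
      abs_of_nonneg (by linarith : (0:ℝ) ≤ |a| ^ γ - |b| ^ γ)]
  have h3 : (|a| ^ γ - |b| ^ γ) * |b| ≤ γ * (|a| ^ γ * (|a| - |b|)) :=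
    rpow_key hγ (abs_nonneg b) h
  have h4 : |a| - |b| ≤ |a - b| := abs_sub_abs_le_abs_sub a b
  have h5 : γ * (|a| ^ γ * (|a| - |b|)) ≤ γ * (|a| ^ γ * |a - b|) := by
    apply mul_le_mul_of_nonneg_left _ hγ
    exact mul_le_mul_of_nonneg_left h4 (Real.rpow_nonneg (abs_nonneg a) γ)
  nlinarith [Real.rpow_nonneg (abs_nonneg b) γ, abs_nonneg (a - b),
    mul_nonneg (Real.rpow_nonneg (abs_nonneg b) γ) (abs_nonneg (a - b))]

lemma pow_diff_bound {γ : ℝ} (hγ : 0 ≤ γ) (a b : ℝ) :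
    |(|a| ^ γ * a) - (|b| ^ γ * b)| ≤ (γ + 1) * ((|a| ^ γ + |b| ^ γ) * |a - b|) := by
  rcases le_total |b| |a| with h | h
  · exact pow_diff_bound_aux hγ h
  · have := pow_diff_bound_aux hγ h
    rw [abs_sub_comm b a, abs_sub_comm (|b| ^ γ * b) (|a| ^ γ * a)] at this
    linarith


/-- The homogeneous Besov (quasi-)norm `‖u‖_{Ḃ^s_{p,2}(ℝ²)}` for `0 < s < 1`, via the
finite-difference characterization
`‖u‖_{Ḃ^s_{p,2}}² ≈ ∫ ‖u(x-·) - u(·)‖_{L^p}² / |x|^{2+2s} dx` (valued in `ℝ≥0∞`).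
For `p = 2` this is the homogeneous Sobolev norm `‖u‖_{Ḣ^s}`. -/
def homBesovNorm (s : ℝ) (p : ℝ≥0∞) (u : EuclideanSpace ℝ (Fin 2) → ℝ) : ℝ≥0∞ :=
  (∫⁻ x : EuclideanSpace ℝ (Fin 2),
      (eLpNorm (fun y => u (y - x) - u y) p volume) ^ (2 : ℕ) /
        (‖x‖₊ : ℝ≥0∞) ^ (2 + 2 * s)) ^ (1/2 : ℝ)

/-- Let `β ∈ [2,∞)`, `s ∈ (0,1)`. For every smooth `u` on `ℝ²`,
`‖|u|^{β-2}u‖_{Ḣ^s} ≤ C ‖u‖_{L^{2β}}^{β-2} ‖u‖_{Ḃ^s_{β,2}}`. -/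
theorem signed_power_homBesov (β s : ℝ) (hβ : 2 ≤ β) (hs : s ∈ Set.Ioo (0:ℝ) 1) :
    ∃ C : ℝ≥0, 0 < C ∧ ∀ u : EuclideanSpace ℝ (Fin 2) → ℝ,
      ContDiff ℝ (⊤ : ℕ∞) u →
      homBesovNorm s 2 (fun x => |u x| ^ (β - 2) * u x) ≤
        (C : ℝ≥0∞) * eLpNorm u (ENNReal.ofReal (2 * β)) volume ^ (β - 2) *
          homBesovNorm s (ENNReal.ofReal β) u := by
  rcases eq_or_lt_of_le hβ with hβ2 | hβ2
  · -- β = 2 : the map is the identity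
    refine ⟨1, one_pos, fun u hu => ?_⟩
    have hfu : (fun x => |u x| ^ (β - 2) * u x) = u := by
      funext x; rw [← hβ2]; simp
    rw [hfu, ← hβ2]
    simp [ENNReal.rpow_zero]
  · set γ := β - 2 with hγdef
    have hγ : (0:ℝ) < γ := by rw [hγdef]; linarith
    have hβ0 : (0:ℝ) < β := by linarith
    refine ⟨(2 * (γ + 1)).toNNReal, Real.toNNReal_pos.mpr (by linarith), fun u hu => ?_⟩
    have hc : Continuous u := hu.continuous
    have hum : AEStronglyMeasurable u (volume : Measure (EuclideanSpace ℝ (Fin 2))) :=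
      hc.aestronglyMeasurable
    set N := eLpNorm u (ENNReal.ofReal (2 * β)) volume with hN
    have htrans : ∀ (x : EuclideanSpace ℝ (Fin 2)) (p : ℝ≥0∞),
        eLpNorm (fun y => u (y - x)) p volume = eLpNorm u p volume := fun x p =>
      eLpNorm_comp_measurePreserving hum (measurePreserving_sub_right volume x)
    set q : ℝ≥0∞ := ENNReal.ofReal (2 * β / γ) with hq
    have hqr : (1:ℝ≥0∞)/2 = 1/q + 1/(ENNReal.ofReal β) := by
      rw [hq, one_div, one_div, one_div, ← ENNReal.ofReal_inv_of_pos (by positivity),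
        ← ENNReal.ofReal_inv_of_pos hβ0,
        ← ENNReal.ofReal_add (by positivity) (by positivity),
        show (2:ℝ≥0∞) = ENNReal.ofReal 2 by norm_num,
        ← ENNReal.ofReal_inv_of_pos two_pos]
      congr 1
      rw [hγdef]
      field_simp
      ring
    have hγexp : ∀ v : EuclideanSpace ℝ (Fin 2) → ℝ, Continuous v →
        eLpNorm (fun y => |v y| ^ γ) q volume
          = eLpNorm v (ENNReal.ofReal (2 * β)) volume ^ γ := by
      intro v hv
      have habs : (fun y => |v y| ^ γ) = fun y => ‖v y‖ ^ γ := by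
        funext y; rw [Real.norm_eq_abs]
      have hqγ : q * ENNReal.ofReal γ = ENNReal.ofReal (2 * β) := by
        rw [hq, ← ENNReal.ofReal_mul (by positivity)]
        congr 1
        field_simp
      rw [habs, eLpNorm_norm_rpow v hγ, hqγ]
    have key : ∀ x : EuclideanSpace ℝ (Fin 2),
        eLpNorm (fun y => |u (y - x)| ^ γ * u (y - x) - |u y| ^ γ * u y) 2 volume ≤
          (ENNReal.ofReal (γ + 1) * (N ^ γ + N ^ γ)) *
            eLpNorm (fun y => u (y - x) - u y) (ENNReal.ofReal β) volume := by
      intro x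
      have hcux : Continuous fun y : EuclideanSpace ℝ (Fin 2) => u (y - x) :=
        hc.comp (continuous_id.sub continuous_const)
      set φ : EuclideanSpace ℝ (Fin 2) → ℝ := fun y => |u (y - x)| ^ γ + |u y| ^ γ with hφ
      set ψ : EuclideanSpace ℝ (Fin 2) → ℝ := fun y => u (y - x) - u y with hψ
      have hφ1c : Continuous fun y : EuclideanSpace ℝ (Fin 2) => |u (y - x)| ^ γ :=
        (hcux.abs).rpow_const fun y => Or.inr hγ.le
      have hφ2c : Continuous fun y : EuclideanSpace ℝ (Fin 2) => |u y| ^ γ :=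
        (hc.abs).rpow_const fun y => Or.inr hγ.le
      have hφc : Continuous φ := hφ1c.add hφ2c
      have hψc : Continuous ψ := hcux.sub hc
      have step1 : eLpNorm (fun y => |u (y - x)| ^ γ * u (y - x) - |u y| ^ γ * u y) 2 volume ≤
          eLpNorm ((γ + 1) • (φ * ψ)) 2 volume := by
        apply eLpNorm_mono
        intro y
        rw [Real.norm_eq_abs, Real.norm_eq_abs, Pi.smul_apply, Pi.mul_apply, smul_eq_mul,
          abs_mul, abs_mul, abs_of_nonneg (by linarith : (0:ℝ) ≤ γ + 1),
          abs_of_nonneg (by positivity : (0:ℝ) ≤ φ y)]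
        exact pow_diff_bound hγ.le (u (y - x)) (u y)
      have step2 : eLpNorm ((γ + 1) • (φ * ψ)) 2 volume
          = (‖(γ+1 : ℝ)‖₊ : ℝ≥0∞) * eLpNorm (φ * ψ) 2 volume := by
        rw [eLpNorm_const_smul, enorm_eq_nnnorm]
      have step3 : eLpNorm (φ * ψ) 2 volume ≤
          eLpNorm φ q volume * eLpNorm ψ (ENNReal.ofReal β) volume := by
        haveI : ENNReal.HolderTriple q (ENNReal.ofReal β) 2 := ⟨by simpa [one_div] using hqr.symm⟩
        have h := eLpNorm_smul_le_mul_eLpNorm (μ := volume) (p := q) (q := ENNReal.ofReal β) (r := 2)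
          hψc.aestronglyMeasurable hφc.aestronglyMeasurable
        exact h
      have step4 : eLpNorm φ q volume ≤ N ^ γ + N ^ γ := by
        have hq1 : 1 ≤ q := by
          rw [hq]
          refine ENNReal.one_le_ofReal.mpr ?_
          rw [le_div_iff₀ hγ]
          rw [hγdef]; linarith
        refine (eLpNorm_add_le hφ1c.aestronglyMeasurable hφ2c.aestronglyMeasurable hq1).trans ?_
        rw [hγexp _ hcux, hγexp _ hc, htrans x]
      calc eLpNorm (fun y => |u (y - x)| ^ γ * u (y - x) - |u y| ^ γ * u y) 2 volume
          ≤ eLpNorm ((γ + 1) • (φ * ψ)) 2 volume := step1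
        _ = (‖(γ+1 : ℝ)‖₊ : ℝ≥0∞) * eLpNorm (φ * ψ) 2 volume := step2
        _ ≤ (‖(γ+1 : ℝ)‖₊ : ℝ≥0∞) * (eLpNorm φ q volume * eLpNorm ψ (ENNReal.ofReal β) volume) :=
            mul_le_mul_right step3 _
        _ ≤ (ENNReal.ofReal (γ + 1) * (N ^ γ + N ^ γ)) *
            eLpNorm ψ (ENNReal.ofReal β) volume := by
            rw [← enorm_eq_nnnorm, Real.enorm_eq_ofReal (by linarith : (0:ℝ) ≤ γ + 1), ← mul_assoc]
            exact mul_le_mul_left (mul_le_mul_right step4 _) _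
    -- measurability of x ↦ D x ^2 / w x
    have hDm : Measurable fun x : EuclideanSpace ℝ (Fin 2) =>
        eLpNorm (fun y => u (y - x) - u y) (ENNReal.ofReal β) volume := by
      have hrepr : ∀ x : EuclideanSpace ℝ (Fin 2),
          eLpNorm (fun y => u (y - x) - u y) (ENNReal.ofReal β) volume
            = (∫⁻ y, ((‖u (y - x) - u y‖₊ : ℝ≥0∞)) ^ β) ^ (1/β) := by
        intro x
        rw [eLpNorm_eq_lintegral_rpow_enorm_toReal (by
            simp only [ne_eq, ENNReal.ofReal_eq_zero, not_le]; linarith) ENNReal.ofReal_ne_top,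
          ENNReal.toReal_ofReal hβ0.le]
        rfl
      simp_rw [hrepr]
      have hg : Measurable (Function.uncurry fun (x y : EuclideanSpace ℝ (Fin 2)) =>
          ((‖u (y - x) - u y‖₊ : ℝ≥0∞)) ^ β) := by
        apply Continuous.measurable
        exact ENNReal.continuous_rpow_const.comp (ENNReal.continuous_coe.comp
          ((hc.comp (continuous_snd.sub continuous_fst)).sub (hc.comp continuous_snd)).nnnorm)
      exact ENNReal.continuous_rpow_const.measurable.comp hg.lintegral_prod_right
    have hwm : Measurable fun x : EuclideanSpace ℝ (Fin 2) => (‖x‖₊ : ℝ≥0∞) ^ (2 + 2*s) :=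
      (ENNReal.continuous_rpow_const.comp (ENNReal.continuous_coe.comp
        continuous_nnnorm)).measurable
    set K := ENNReal.ofReal (γ + 1) * (N ^ γ + N ^ γ) with hK
    have hAm : AEMeasurable (fun x : EuclideanSpace ℝ (Fin 2) =>
        eLpNorm (fun y => u (y - x) - u y) (ENNReal.ofReal β) volume ^ (2:ℕ) /
          (‖x‖₊ : ℝ≥0∞) ^ (2 + 2*s)) volume :=
      ((hDm.pow_const 2).div hwm).aemeasurable
    calc homBesovNorm s 2 (fun x => |u x| ^ (β - 2) * u x)
        ≤ (∫⁻ x : EuclideanSpace ℝ (Fin 2),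
            (K * eLpNorm (fun y => u (y - x) - u y) (ENNReal.ofReal β) volume) ^ (2:ℕ) /
              (‖x‖₊ : ℝ≥0∞) ^ (2 + 2*s)) ^ (1/2 : ℝ) := by
          rw [homBesovNorm]
          gcongr with x
          exact key x
      _ = (K ^ (2:ℕ) * ∫⁻ x : EuclideanSpace ℝ (Fin 2),
            eLpNorm (fun y => u (y - x) - u y) (ENNReal.ofReal β) volume ^ (2:ℕ) /
              (‖x‖₊ : ℝ≥0∞) ^ (2 + 2*s)) ^ (1/2 : ℝ) := by
          congr 1
          simp_rw [mul_pow, mul_div_assoc]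
          exact lintegral_const_mul'' _ hAm
      _ = K * homBesovNorm s (ENNReal.ofReal β) u := by
          rw [ENNReal.mul_rpow_of_nonneg _ _ (by norm_num : (0:ℝ) ≤ 1/2),
            ← ENNReal.rpow_natCast K 2, ← ENNReal.rpow_mul]
          norm_num [homBesovNorm]
      _ = ((2 * (γ + 1)).toNNReal : ℝ≥0∞) * N ^ γ * homBesovNorm s (ENNReal.ofReal β) u := by
          rw [hK]
          congr 1
          rw [← two_mul, ← mul_assoc, ← ENNReal.ofReal_coe_nnreal]
          · rw [Real.coe_toNNReal _ (by positivity), ENNReal.ofReal_mul (by norm_num),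
              ENNReal.ofReal_ofNat, mul_comm (ENNReal.ofReal (γ+1)) 2, mul_assoc]

end
end
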